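/- arXiv:1710.07774 — 4 statements merged into one kernel-verified Lean document; each statement's English description precedes it below -/
import Mathlib

section
/- Let (X,d) be a metric space, T ⊆ X a finite terminal set, π : X → [0,∞) a penalty function, B ⊆ X, and u ∈ B. For a finite multiset F of edges (unordered pairs of points of X), let V(F) denote its vertex set and w(F) = Σ_{{x,y}∈F} d(x,y). Define c(F) = w(F) + Σ_{v∈T∖V(F)} π(v); for edge sets covering u define c₁(F') = w(F') + Σ_{v∈(B∩T)∖V(F')} π(v); and, for a fixed connected edge multiset F₁ with u ∈ V(F₁), define c₂(F'') = w(F'') + Σ_{v∈((T∖B)∪{u})∖V(F'')} π₂(v), where π₂ = π on T∖B and π₂(u) = Σ_{v∈T∩B} π(v) − c₁(F₁). Then for any connected edge multisets F̂₁ and F̂₂ with u ∈ V(F̂₁) and u ∈ V(F̂₂), the multiset union F = F̂₁ ∪ F̂₂ is connected (and is Eulerian whenever F̂₁ and F̂₂ are both Eulerian), and c(F) ≤ c₁(F̂₁) + c₂(F̂₂). -/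
open scoped Classical

/-- The weight of an (undirected) edge, given by the metric. -/
noncomputable def edgeLen {X : Type*} [MetricSpace X] : Sym2 X → ℝ :=
  Sym2.lift ⟨fun x y => dist x y, fun x y => dist_comm x y⟩

/-- The vertex set covered by a multiset of edges. -/
def mVerts {X : Type*} (F : Multiset (Sym2 X)) : Set X := {x | ∃ e ∈ F, x ∈ e}

/-- The total edge weight of a multiset of edges (with multiplicity). -/
noncomputable def mWeight {X : Type*} [MetricSpace X] (F : Multiset (Sym2 X)) : ℝ :=
  (F.map edgeLen).sum

/-- The simple graph induced by a multiset of edges. -/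
def mGraph {X : Type*} (F : Multiset (Sym2 X)) : SimpleGraph X :=
  SimpleGraph.fromEdgeSet {e | e ∈ F}

/-- The multigraph `F` is connected on the vertices it covers. -/
def MConnected {X : Type*} (F : Multiset (Sym2 X)) : Prop :=
  ∀ x ∈ mVerts F, ∀ y ∈ mVerts F, (mGraph F).Reachable x y

/-- The degree of `v` in the edge multiset `F` (self-loops count twice). -/
noncomputable def mDegree {X : Type*} (F : Multiset (Sym2 X)) (v : X) : ℕ :=
  (F.filter (fun e => v ∈ e)).card + (F.filter (fun e => e = s(v, v))).card

/-- `F` is Eulerian: every covered vertex has even degree. -/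
def MEulerian {X : Type*} (F : Multiset (Sym2 X)) : Prop :=
  ∀ v ∈ mVerts F, Even (mDegree F v)

/-- The cost `c(F) = w(F) + Σ_{v ∈ T∖V(F)} π(v)` of `F` in the original instance. -/
noncomputable def cOrig {X : Type*} [MetricSpace X] (T : Finset X) (π : X → ℝ)
    (F : Multiset (Sym2 X)) : ℝ :=
  mWeight F + ∑ v ∈ T.filter (fun v => v ∉ mVerts F), π v

/-- The cost `c₁(F) = w(F) + Σ_{v ∈ (B∩T)∖V(F)} π(v)` in the sub-instance `W₁`
(for solutions covering `u`, so the infinite penalty at `u` is never charged). -/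
noncomputable def cOne {X : Type*} [MetricSpace X] (T : Finset X) (π : X → ℝ) (B : Set X)
    (F : Multiset (Sym2 X)) : ℝ :=
  mWeight F + ∑ v ∈ (T.filter (fun v => v ∈ B)).filter (fun v => v ∉ mVerts F), π v

/-- The penalty function of instance `W₂`: `π` on `T∖B`, and
`π₂(u) = Σ_{v∈T∩B} π(v) − c₁(F₁)` at `u`. -/
noncomputable def piTwo {X : Type*} [MetricSpace X] (T : Finset X) (π : X → ℝ) (B : Set X)
    (u : X) (F₁ : Multiset (Sym2 X)) : X → ℝ :=
  fun v => if v = u then (∑ w ∈ T.filter (fun w => w ∈ B), π w) - cOne T π B F₁ else π v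

/-- The cost `c₂(F) = w(F) + Σ_{v ∈ ((T∖B)∪{u})∖V(F)} π₂(v)` in the sub-instance `W₂`. -/
noncomputable def cTwo {X : Type*} [MetricSpace X] (T : Finset X) (π : X → ℝ) (B : Set X)
    (u : X) (F₁ F : Multiset (Sym2 X)) : ℝ :=
  mWeight F + ∑ v ∈ (T.filter (fun v => v ∉ B) ∪ {u}).filter (fun v => v ∉ mVerts F),
    piTwo T π B u F₁ v

lemma mVerts_add {X : Type*} (F G : Multiset (Sym2 X)) :
    mVerts (F + G) = mVerts F ∪ mVerts G := by
  ext x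
  simp only [mVerts, Set.mem_setOf_eq, Multiset.mem_add, Set.mem_union]
  constructor
  · rintro ⟨e, he | he, hx⟩
    · exact Or.inl ⟨e, he, hx⟩
    · exact Or.inr ⟨e, he, hx⟩
  · rintro (⟨e, he, hx⟩ | ⟨e, he, hx⟩)
    · exact ⟨e, Or.inl he, hx⟩
    · exact ⟨e, Or.inr he, hx⟩

lemma mGraph_le_add_left {X : Type*} (F G : Multiset (Sym2 X)) :
    mGraph F ≤ mGraph (F + G) := by
  apply SimpleGraph.fromEdgeSet_mono
  intro e he
  simp only [Set.mem_setOf_eq, Multiset.mem_add] at *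
  exact Or.inl he

lemma mGraph_le_add_right {X : Type*} (F G : Multiset (Sym2 X)) :
    mGraph G ≤ mGraph (F + G) := by
  apply SimpleGraph.fromEdgeSet_mono
  intro e he
  simp only [Set.mem_setOf_eq, Multiset.mem_add] at *
  exact Or.inr he

/-- **Combining solutions of sub-instances (both cover `u`).** If `F̂₁` and `F̂₂` are
connected edge multisets both covering `u`, then their multiset union is connected
(and Eulerian whenever both are), and `c(F̂₁ ∪ F̂₂) ≤ c₁(F̂₁) + c₂(F̂₂)`. -/
theorem combine_subinstance_solutions {X : Type*} [MetricSpace X]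
    (T : Finset X) (π : X → ℝ) (hπ : ∀ v, 0 ≤ π v)
    (B : Set X) (u : X) (hu : u ∈ B)
    (F₁ : Multiset (Sym2 X)) (hF₁conn : MConnected F₁) (hF₁u : u ∈ mVerts F₁)
    (Fh₁ Fh₂ : Multiset (Sym2 X))
    (h1conn : MConnected Fh₁) (h2conn : MConnected Fh₂)
    (h1u : u ∈ mVerts Fh₁) (h2u : u ∈ mVerts Fh₂) :
    MConnected (Fh₁ + Fh₂) ∧
    (MEulerian Fh₁ → MEulerian Fh₂ → MEulerian (Fh₁ + Fh₂)) ∧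
    cOrig T π (Fh₁ + Fh₂) ≤ cOne T π B Fh₁ + cTwo T π B u F₁ Fh₂ := by
  have hV : mVerts (Fh₁ + Fh₂) = mVerts Fh₁ ∪ mVerts Fh₂ := mVerts_add _ _
  -- reach to u
  have hreach : ∀ x ∈ mVerts (Fh₁ + Fh₂), (mGraph (Fh₁ + Fh₂)).Reachable x u := by
    intro x hx
    rw [hV] at hx
    rcases hx with hx | hx
    · exact (h1conn x hx u h1u).mono (mGraph_le_add_left _ _)
    · exact (h2conn x hx u h2u).mono (mGraph_le_add_right _ _)
  refine ⟨?_, ?_, ?_⟩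
  · intro x hx y hy
    exact (hreach x hx).trans (hreach y hy).symm
  · intro h1 h2 v hv
    have hdeg : mDegree (Fh₁ + Fh₂) v = mDegree Fh₁ v + mDegree Fh₂ v := by
      simp only [mDegree, Multiset.filter_add, Multiset.card_add]
      ring
    rw [hV] at hv
    rw [hdeg]
    rcases hv with hv | hv
    · rcases Classical.em (v ∈ mVerts Fh₂) with hv2 | hv2
      · exact (h1 v hv).add (h2 v hv2)
      · have : mDegree Fh₂ v = 0 := by
          simp only [mDegree]
          have he : ∀ e ∈ Fh₂, ¬ v ∈ e := fun e he hve => hv2 ⟨e, he, hve⟩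
          rw [Multiset.filter_eq_nil.2 he, Multiset.filter_eq_nil.2 ?_]
          · simp
          · intro e heF hee
            exact he e heF (by rw [hee]; exact Sym2.mem_mk_left v v)
        rw [this, Nat.add_zero]
        exact h1 v hv
    · rcases Classical.em (v ∈ mVerts Fh₁) with hv1 | hv1
      · exact (h1 v hv1).add (h2 v hv)
      · have : mDegree Fh₁ v = 0 := by
          simp only [mDegree]
          have he : ∀ e ∈ Fh₁, ¬ v ∈ e := fun e he hve => hv1 ⟨e, he, hve⟩
          rw [Multiset.filter_eq_nil.2 he, Multiset.filter_eq_nil.2 ?_]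
          · simp
          · intro e heF hee
            exact he e heF (by rw [hee]; exact Sym2.mem_mk_left v v)
        rw [this, Nat.zero_add]
        exact h2 v hv
  · -- cost
    have hw : mWeight (Fh₁ + Fh₂) = mWeight Fh₁ + mWeight Fh₂ := by
      simp [mWeight, Multiset.map_add]
    set S := T.filter (fun v => v ∉ mVerts (Fh₁ + Fh₂)) with hS
    set S1 := (T.filter (fun v => v ∈ B)).filter (fun v => v ∉ mVerts Fh₁) with hS1
    set S2 := (T.filter (fun v => v ∉ B) ∪ {u}).filter (fun v => v ∉ mVerts Fh₂) with hS2
    have hsub : S ⊆ S1 ∪ S2 := by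
      intro v hv
      simp only [hS, Finset.mem_filter] at hv
      obtain ⟨hvT, hvn⟩ := hv
      rw [hV] at hvn
      have hn1 : v ∉ mVerts Fh₁ := fun h => hvn (Or.inl h)
      have hn2 : v ∉ mVerts Fh₂ := fun h => hvn (Or.inr h)
      rcases Classical.em (v ∈ B) with hvB | hvB
      · apply Finset.mem_union_left
        simp only [hS1, Finset.mem_filter]
        exact ⟨⟨hvT, hvB⟩, hn1⟩
      · apply Finset.mem_union_right
        simp only [hS2, Finset.mem_filter, Finset.mem_union, Finset.mem_singleton]
        exact ⟨Or.inl ⟨hvT, hvB⟩, hn2⟩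
    have hS2π : ∀ v ∈ S2, piTwo T π B u F₁ v = π v := by
      intro v hv
      simp only [hS2, Finset.mem_filter] at hv
      have hvu : v ≠ u := by
        rintro rfl
        exact hv.2 h2u
      simp [piTwo, hvu]
    have h1 : ∑ v ∈ S, π v ≤ ∑ v ∈ S1 ∪ S2, π v :=
      Finset.sum_le_sum_of_subset_of_nonneg hsub (fun v _ _ => hπ v)
    have h2 : ∑ v ∈ S1 ∪ S2, π v ≤ ∑ v ∈ S1, π v + ∑ v ∈ S2, π v := by
      rw [← Finset.sum_union_inter]
      have := Finset.sum_nonneg (s := S1 ∩ S2) (f := π) (fun v _ => hπ v)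
      linarith
    have h3 : ∑ v ∈ S2, piTwo T π B u F₁ v = ∑ v ∈ S2, π v :=
      Finset.sum_congr rfl hS2π
    simp only [cOrig, cOne, cTwo, hw, ← hS, ← hS1, ← hS2, h3]
    linarith
end

section
/- Let (X,d) be a metric space, T ⊆ X a finite terminal set, π : X → [0,∞) a penalty function, B ⊆ X, and u ∈ B. For a finite multiset F of edges, let V(F) be its vertex set and w(F) = Σ_{{x,y}∈F} d(x,y). Define c(F) = w(F) + Σ_{v∈T∖V(F)} π(v); for edge sets covering u define c₁(F') = w(F') + Σ_{v∈(B∩T)∖V(F')} π(v); fix a connected edge multiset F₁ with u ∈ V(F₁), and define c₂(F'') = w(F'') + Σ_{v∈((T∖B)∪{u})∖V(F'')} π₂(v), where π₂ = π on T∖B and π₂(u) = Σ_{v∈T∩B} π(v) − c₁(F₁). Then for any edge multiset F̂₂ with u ∉ V(F̂₂), one has c(F̂₂) ≤ c₁(F₁) + c₂(F̂₂). -/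
open scoped Classical

/-- **Combining costs when the remaining solution skips `u`.** For any edge multiset
`F̂₂` not covering `u`, one has `c(F̂₂) ≤ c₁(F₁) + c₂(F̂₂)`, where the penalty of `u`
in `W₂` is `π₂(u) = Σ_{v∈T∩B} π(v) − c₁(F₁)` for a fixed connected solution `F₁`
of `W₁` covering `u`. -/
theorem cost_bound_when_skipping_u {X : Type*} [MetricSpace X]
    (T : Finset X) (π : X → ℝ) (hπ : ∀ v, 0 ≤ π v)
    (B : Set X) (u : X) (hu : u ∈ B)
    (F₁ : Multiset (Sym2 X)) (hF₁conn : MConnected F₁) (hF₁u : u ∈ mVerts F₁)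
    (Fh₂ : Multiset (Sym2 X)) (h2u : u ∉ mVerts Fh₂) :
    cOrig T π Fh₂ ≤ cOne T π B F₁ + cTwo T π B u F₁ Fh₂ := by
  classical
  have hne : ∀ v ∈ (T.filter (fun v => v ∉ B)).filter (fun v => v ∉ mVerts Fh₂), v ≠ u := by
    intro v hv
    simp only [Finset.mem_filter] at hv
    rintro rfl; exact hv.1.2 hu
  have hA : (T.filter (fun v => v ∉ B) ∪ {u}).filter (fun v => v ∉ mVerts Fh₂)
      = insert u ((T.filter (fun v => v ∉ B)).filter (fun v => v ∉ mVerts Fh₂)) := by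
    ext v
    simp only [Finset.mem_filter, Finset.mem_union, Finset.mem_singleton, Finset.mem_insert]
    constructor
    · rintro ⟨h1 | rfl, h2⟩
      · exact Or.inr ⟨h1, h2⟩
      · exact Or.inl rfl
    · rintro (rfl | ⟨h1, h2⟩)
      · exact ⟨Or.inr rfl, h2u⟩
      · exact ⟨Or.inl h1, h2⟩
  unfold cOrig cTwo piTwo
  rw [hA, Finset.sum_insert (by
    simp only [Finset.mem_filter]
    rintro ⟨⟨_, hB⟩, _⟩; exact hB hu)]
  rw [if_pos rfl, Finset.sum_congr rfl (fun v hv => if_neg (hne v hv))]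
  have key : ∑ v ∈ T.filter (fun v => v ∉ mVerts Fh₂), π v ≤
      (∑ w ∈ T.filter (fun w => w ∈ B), π w)
      + ∑ v ∈ (T.filter (fun v => v ∉ B)).filter (fun v => v ∉ mVerts Fh₂), π v := by
    rw [← Finset.sum_union (by
      rw [Finset.disjoint_left]
      intro v hv hv'
      simp only [Finset.mem_filter] at hv hv'
      exact hv'.1.2 hv.2)]
    apply Finset.sum_le_sum_of_subset_of_nonneg
    · intro v hv
      simp only [Finset.mem_filter, Finset.mem_union] at hv ⊢
      by_cases hB : v ∈ B
      · exact Or.inl ⟨hv.1, hB⟩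
      · exact Or.inr ⟨⟨hv.1, hB⟩, hv.2⟩
    · intro v _ _; exact hπ v
  linarith
end

section
/- Let (Ω, ℱ, ℙ) be a probability space, let c > 0 and ε > 0 be real numbers, and let X : Ω → ℝ be an integrable random variable such that X ≥ (1−ε)·c almost surely and E[X] ≤ (1+ε)·c. If ℙ[X ≤ c] ≤ 1/2, then ℙ[X > c] > 0 and the conditional expectation satisfies E[X | X > c] ≤ (1+4ε)·c. -/
open MeasureTheory

namespace MeasureTheory

variable {Ω : Type*} [MeasurableSpace Ω] {μ : Measure Ω}

lemma half_le_prob_compl [IsProbabilityMeasure μ] {s : Set Ω} (hs : μ s ≤ 1 / 2) :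
    1 / 2 ≤ μ sᶜ := by
  have hcover : 1 ≤ μ s + μ sᶜ := by
    simpa [Set.union_compl_self] using measure_union_le (μ := μ) s sᶜ
  have : 1 / 2 + 1 / 2 ≤ 1 / 2 + μ sᶜ :=
    calc (1 : ENNReal) / 2 + 1 / 2 = 1 := ENNReal.add_halves 1
      _ ≤ μ s + μ sᶜ := hcover
      _ ≤ 1 / 2 + μ sᶜ := by gcongr
  exact (ENNReal.add_le_add_iff_left (by norm_num)).mp this

lemma setIntegral_le_integral_sub_of_ae_le [IsFiniteMeasure μ] {s : Set Ω} {f : Ω → ℝ}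
    {m : ℝ} (hs : NullMeasurableSet s μ) (hf : Integrable f μ) (hm : ∀ᵐ ω ∂μ, m ≤ f ω) :
    ∫ ω in s, f ω ∂μ ≤ ∫ ω, f ω ∂μ - m * μ.real sᶜ := by
  have hcompl : m * μ.real sᶜ ≤ ∫ ω in sᶜ, f ω ∂μ := by
    calc m * μ.real sᶜ = ∫ _ in sᶜ, m ∂μ := by rw [setIntegral_const, smul_eq_mul, mul_comm]
      _ ≤ ∫ ω in sᶜ, f ω ∂μ :=
        integral_mono_ae (integrable_const m) hf.integrableOn (ae_restrict_of_ae hm)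
  linarith [integral_add_compl₀ hs hf]

end MeasureTheory

/-- If `X ≥ (1−ε)c` almost surely, `E[X] ≤ (1+ε)c`, and `ℙ[X ≤ c] ≤ 1/2`, then the
event `{X > c}` has positive probability and `E[X | X > c] ≤ (1+4ε)c`, where
`E[X | A] = E[X·1_A]/ℙ[A]`. -/
theorem conditional_expectation_bound {Ω : Type*} [MeasurableSpace Ω]
    (μ : Measure Ω) [IsProbabilityMeasure μ]
    (c ε : ℝ) (hc : 0 < c) (hε : 0 < ε)
    (X : Ω → ℝ) (hint : Integrable X μ)
    (hlb : ∀ᵐ ω ∂μ, (1 - ε) * c ≤ X ω)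
    (hub : ∫ ω, X ω ∂μ ≤ (1 + ε) * c)
    (hhalf : μ {ω | X ω ≤ c} ≤ 1 / 2) :
    0 < μ {ω | c < X ω} ∧
      (∫ ω in {ω | c < X ω}, X ω ∂μ) / (μ {ω | c < X ω}).toReal ≤ (1 + 4 * ε) * c := by
  have hA : NullMeasurableSet {ω | c < X ω} μ :=
    nullMeasurableSet_lt aemeasurable_const hint.aemeasurable
  have hA_half : 1 / 2 ≤ μ {ω | c < X ω} := by
    simpa [Set.compl_ofPred, not_le] using half_le_prob_compl hhalf
  refine ⟨lt_of_lt_of_le (by norm_num) hA_half, ?_⟩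
  have hp : 1 / 2 ≤ μ.real {ω | c < X ω} := by
    simpa [measureReal_def] using ENNReal.toReal_mono (measure_ne_top μ _) hA_half
  have hI := setIntegral_le_integral_sub_of_ae_le hA hint hlb
  rw [probReal_compl_eq_one_sub₀ hA] at hI
  rw [← measureReal_def, div_le_iff₀ (by linarith)]
  -- `(1 + ε) - (1 - ε)(1 - p) ≤ (1 + 4ε) p` reduces to `2ε ≤ 5εp`, true since `p ≥ 1/2`.
  nlinarith [mul_pos hε hc]
end

section
/- Let (X,d) be a metric space, let u, x, y ∈ X, let s > 0 and a ≥ 0 be real numbers, and let h be a random variable distributed uniformly on the interval [0, 1/2]. Consider the random closed ball B = B(u, (a+h)·s). Then the probability that B separates x and y — i.e., that exactly one of x, y lies in B — is at most 2·d(x,y)/s. -/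
open MeasureTheory

lemma xor_le_iff (p q r : ℝ) : Xor' (p ≤ r) (q ≤ r) ↔ min p q ≤ r ∧ r < max p q := by
  unfold Xor'
  constructor
  · rintro (⟨h1, h2⟩ | ⟨h1, h2⟩)
    · exact ⟨min_le_iff.mpr (Or.inl h1), lt_max_iff.mpr (Or.inr (lt_of_not_ge h2))⟩
    · exact ⟨min_le_iff.mpr (Or.inr h1), lt_max_iff.mpr (Or.inl (lt_of_not_ge h2))⟩
  · rintro ⟨h1, h2⟩
    rcases le_total p q with hpq | hpq
    · exact Or.inl ⟨min_eq_left hpq ▸ h1, not_le_of_gt (max_eq_right hpq ▸ h2)⟩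
    · exact Or.inr ⟨min_eq_right hpq ▸ h1, not_le_of_gt (max_eq_left hpq ▸ h2)⟩

/-- **Random cutting ball.** If `h` is uniformly distributed on `[0, 1/2]`, then the
probability that the random closed ball `B(u, (a+h)·s)` separates `x` and `y`
(i.e. contains exactly one of them) is at most `2·d(x,y)/s`. -/
theorem random_ball_cut_probability {X : Type*} [MetricSpace X] (u x y : X)
    (s a : ℝ) (hs : 0 < s) (ha : 0 ≤ a)
    {Ω : Type*} [MeasurableSpace Ω] (μ : Measure Ω) [IsProbabilityMeasure μ]
    (h : Ω → ℝ) (hmeas : Measurable h)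
    (hlaw : Measure.map h μ = (2 : ENNReal) • volume.restrict (Set.Icc (0 : ℝ) (1 / 2))) :
    μ {ω | Xor' (x ∈ Metric.closedBall u ((a + h ω) * s))
            (y ∈ Metric.closedBall u ((a + h ω) * s))} ≤
      ENNReal.ofReal (2 * dist x y / s) := by
  set dx := dist x u with hdx
  set dy := dist y u with hdy
  set m := min dx dy
  set M := max dx dy
  have hset : {ω | Xor' (x ∈ Metric.closedBall u ((a + h ω) * s))
            (y ∈ Metric.closedBall u ((a + h ω) * s))}
      = h ⁻¹' Set.Ico (m / s - a) (M / s - a) := by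
    ext ω
    simp only [Set.mem_setOf_eq, Metric.mem_closedBall, Set.mem_preimage, Set.mem_Ico,
      ← hdx, ← hdy]
    rw [xor_le_iff]
    constructor
    · rintro ⟨h1, h2⟩
      constructor
      · rw [sub_le_iff_le_add, div_le_iff₀ hs]
        linarith [h1]
      · rw [lt_sub_iff_add_lt, lt_div_iff₀ hs]
        linarith [h2]
    · rintro ⟨h1, h2⟩
      rw [sub_le_iff_le_add, div_le_iff₀ hs] at h1
      rw [lt_sub_iff_add_lt, lt_div_iff₀ hs] at h2
      exact ⟨by linarith, by linarith⟩
  rw [hset, ← Measure.map_apply hmeas measurableSet_Ico, hlaw]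
  have h1 : ((2 : ENNReal) • volume.restrict (Set.Icc (0 : ℝ) (1 / 2)))
      (Set.Ico (m / s - a) (M / s - a)) ≤ 2 * volume (Set.Ico (m / s - a) (M / s - a)) := by
    rw [Measure.smul_apply, smul_eq_mul]
    exact mul_le_mul_right (Measure.restrict_apply_le _ _) 2
  refine h1.trans ?_
  rw [Real.volume_Ico]
  rw [← ENNReal.ofReal_ofNat, ← ENNReal.ofReal_mul (by norm_num)]
  apply ENNReal.ofReal_le_ofReal
  have hMm : M - m ≤ dist x y := by
    have := abs_dist_sub_le x y u
    rw [← hdx, ← hdy] at this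
    calc M - m = |dx - dy| := by
          rcases le_total dx dy with h' | h' <;>
            simp [M, m, max_eq_right, max_eq_left, min_eq_left, min_eq_right, h',
              abs_of_nonpos, abs_of_nonneg, sub_nonneg.mpr h'] <;> linarith
      _ ≤ dist x y := this
  have : M / s - a - (m / s - a) = (M - m) / s := by ring
  rw [this]
  rw [mul_div_assoc]
  gcongr
end
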